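/- arXiv:1801.06112 — 3 statements merged into one kernel-verified Lean document; each statement's English description precedes it below -/
import Mathlib

section
/- Let K be a field, P = K[x_1,...,x_n], σ a term ordering, and I, J ideals in P. If I is strictly contained in J, then O_σ(J) strictly σ-precedes O_σ(I). -/
open MvPolynomial
open scoped Classical

namespace GB

variable {n : ℕ}

/-- The σ-leading exponent (leading term, as a power-product) of a polynomial;
`0` for the zero polynomial. -/
noncomputable def lexp {K : Type*} [CommSemiring K] (m : MonomialOrder (Fin n))
    (f : MvPolynomial (Fin n) K) : Fin n →₀ ℕ :=
  m.toSyn.symm (f.support.sup fun d => m.toSyn d)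

/-- The σ-leading coefficient. -/
noncomputable def lcoeff {K : Type*} [CommSemiring K] (m : MonomialOrder (Fin n))
    (f : MvPolynomial (Fin n) K) : K :=
  MvPolynomial.coeff (lexp m f) f

/-- The σ-leading monomial (leading coefficient times leading power-product). -/
noncomputable def LM {K : Type*} [CommSemiring K] (m : MonomialOrder (Fin n))
    (f : MvPolynomial (Fin n) K) : MvPolynomial (Fin n) K :=
  monomial (lexp m f) (lcoeff m f)

/-- The leading term ideal `LT_σ(I)` of an ideal, over a field. -/
noncomputable def LTIdeal {K : Type*} [Field K] (m : MonomialOrder (Fin n))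
    (I : Ideal (MvPolynomial (Fin n) K)) : Ideal (MvPolynomial (Fin n) K) :=
  Ideal.span {t | ∃ f ∈ I, f ≠ 0 ∧ t = monomial (lexp m f) (1 : K)}

/-- `G` is a σ-Gröbner basis of `I` (over a field). -/
def IsGB {K : Type*} [Field K] (m : MonomialOrder (Fin n))
    (G : Finset (MvPolynomial (Fin n) K)) (I : Ideal (MvPolynomial (Fin n) K)) : Prop :=
  (0 : MvPolynomial (Fin n) K) ∉ G ∧ (G : Set (MvPolynomial (Fin n) K)) ⊆ I ∧
    Ideal.span (G : Set (MvPolynomial (Fin n) K)) = I ∧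
    ∀ f ∈ I, f ≠ 0 → ∃ g ∈ G, lexp m g ≤ lexp m f

/-- `G` is the reduced σ-Gröbner basis of `I`. -/
def IsReducedGB {K : Type*} [Field K] (m : MonomialOrder (Fin n))
    (G : Finset (MvPolynomial (Fin n) K)) (I : Ideal (MvPolynomial (Fin n) K)) : Prop :=
  IsGB m G I ∧ (∀ g ∈ G, lcoeff m g = 1) ∧
    ∀ g ∈ G, ∀ d ∈ g.support, ∀ g' ∈ G, g' ≠ g → ¬ lexp m g' ≤ d

/-- `G` is a strong σ-Gröbner basis of the ideal `J ⊆ ℤ[x]` it generates. -/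
def IsStrongGB (m : MonomialOrder (Fin n)) (G : Finset (MvPolynomial (Fin n) ℤ))
    (J : Ideal (MvPolynomial (Fin n) ℤ)) : Prop :=
  (0 : MvPolynomial (Fin n) ℤ) ∉ G ∧ Ideal.span (G : Set (MvPolynomial (Fin n) ℤ)) = J ∧
    ∀ f ∈ J, f ≠ 0 → ∃ g ∈ G, LM m g ∣ LM m f

/-- `G` is a minimal strong σ-Gröbner basis of `J`. -/
def IsMinStrongGB (m : MonomialOrder (Fin n)) (G : Finset (MvPolynomial (Fin n) ℤ))
    (J : Ideal (MvPolynomial (Fin n) ℤ)) : Prop :=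
  IsStrongGB m G J ∧ ∀ g ∈ G, ∀ g' ∈ G, g ≠ g' → ¬ LM m g ∣ LM m g'

/-- The denominator of a polynomial with rational coefficients. -/
def den (f : MvPolynomial (Fin n) ℚ) : ℕ :=
  f.support.lcm fun d => (MvPolynomial.coeff d f).den

/-- The denominator of a finite set of polynomials. -/
noncomputable def denF (G : Finset (MvPolynomial (Fin n) ℚ)) : ℕ :=
  G.lcm den

/-- `f` scaled by `den f`, as an integer polynomial. -/
noncomputable def intScale (f : MvPolynomial (Fin n) ℚ) : MvPolynomial (Fin n) ℤ :=
  f.support.sum fun d => monomial d (MvPolynomial.coeff d f * (den f : ℚ)).num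

/-- The primitive integral part of a polynomial with rational coefficients. -/
noncomputable def primQ (f : MvPolynomial (Fin n) ℚ) : MvPolynomial (Fin n) ℤ :=
  (intScale f).support.sum fun d =>
    monomial d (MvPolynomial.coeff d (intScale f) /
      ((intScale f).support.gcd fun e => MvPolynomial.coeff e (intScale f)))

/-- Reduction of a rational number modulo `p` (meaningful when `p ∤ a.den`). -/
noncomputable def redQ (p : ℕ) (a : ℚ) : ZMod p :=
  (a.num : ZMod p) * (a.den : ZMod p)⁻¹

/-- Coefficientwise reduction modulo `p` of a polynomial with rational coefficients
(meaningful when `p` divides no coefficient denominator). -/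
noncomputable def piP (p : ℕ) (f : MvPolynomial (Fin n) ℚ) :
    MvPolynomial (Fin n) (ZMod p) :=
  f.support.sum fun d => monomial d (redQ p (MvPolynomial.coeff d f))

/-- A σ-ordered tuple of (necessarily distinct) power-products. -/
def SOrd (m : MonomialOrder (Fin n)) (L : List (Fin n →₀ ℕ)) : Prop :=
  L.Pairwise fun a b => m.toSyn a < m.toSyn b

/-- `T'` strictly σ-precedes `T`:  either `T` is a proper prefix of `T'`, or at the first
index where they differ (within both lengths) the entry of `T'` is σ-smaller. -/
def Prec (m : MonomialOrder (Fin n)) (T' T : List (Fin n →₀ ℕ)) : Prop :=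
  (T <+: T' ∧ T ≠ T') ∨
    ∃ k, k < T.length ∧ k < T'.length ∧ T.take k = T'.take k ∧
      m.toSyn (T'.getD k 0) < m.toSyn (T.getD k 0)

/-- `T'` σ-precedes or equals `T`. -/
def PrecEq (m : MonomialOrder (Fin n)) (T' T : List (Fin n →₀ ℕ)) : Prop :=
  Prec m T' T ∨ T' = T

/-- The minimal generating set of the monomial ideal `LT_σ(I)`: the set of leading
power-products of nonzero elements of `I` which are minimal w.r.t. divisibility. -/
def minGenSet {K : Type*} [Field K] (m : MonomialOrder (Fin n))
    (I : Ideal (MvPolynomial (Fin n) K)) : Set (Fin n →₀ ℕ) :=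
  {d | (∃ f ∈ I, f ≠ 0 ∧ lexp m f = d) ∧
    ∀ f ∈ I, f ≠ 0 → lexp m f ≤ d → lexp m f = d}

/-- `L` is the tuple `O_σ(I)`: the σ-ordered tuple of the minimal generating set
of `LT_σ(I)`. -/
def IsOsIdeal {K : Type*} [Field K] (m : MonomialOrder (Fin n))
    (I : Ideal (MvPolynomial (Fin n) K)) (L : List (Fin n →₀ ℕ)) : Prop :=
  SOrd m L ∧ ∀ d, d ∈ L ↔ d ∈ minGenSet m I

/-- `L` is the σ-ordered tuple of the interreduction of the set `S` of power-products. -/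
def IsOsSet (m : MonomialOrder (Fin n)) (S : Finset (Fin n →₀ ℕ))
    (L : List (Fin n →₀ ℕ)) : Prop :=
  SOrd m L ∧ ∀ d, d ∈ L ↔ (d ∈ S ∧ ∀ s ∈ S, s ≤ d → s = d)

end GB


/-!
If `O_σ(I)` and `O_σ(J)` differ, the σ-smallest power-product in their symmetric difference
decides the comparison. It cannot lie in `O_σ(I)` only: such a `t` is a leading power-product
of `J ⊇ I`, so it is divisible by some generator `t'` of `LT_σ(J)`; `t' ≠ t`, and `t'` is not a
minimal generator of `LT_σ(I)` either (it would then divide, hence equal, `t`), so `t'` is a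
σ-smaller element of the symmetric difference. And the tuples cannot coincide, because an
inclusion `I ⊆ J` of ideals with the same leading term ideal is an equality.
-/

namespace MonomialOrder

variable {σ K : Type*} [Field K] (m : MonomialOrder σ)

theorem ideal_le_of_le_of_forall_exists_degree_le {I J : Ideal (MvPolynomial σ K)} (hIJ : I ≤ J)
    (hlead : ∀ f ∈ J, f ≠ 0 → ∃ g ∈ I, g ≠ 0 ∧ m.degree g ≤ m.degree f) : J ≤ I := by
  intro f
  induction hd : m.toSyn (m.degree f) using WellFoundedLT.induction generalizing f with
  | _ d ih =>
  intro hfJ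
  rcases eq_or_ne f 0 with rfl | hf0
  · exact I.zero_mem
  obtain ⟨g, hgI, hg0, hgf⟩ := hlead f hfJ hf0
  have hg : IsUnit (m.leadingCoeff g) := m.isUnit_leadingCoeff.mpr hg0
  by_cases hf_const : m.degree f = 0
  · have hg_const : m.degree g = 0 := le_antisymm (hf_const ▸ hgf) bot_le
    have hI : I = ⊤ := I.eq_top_of_isUnit_mem hgI <| by
      rw [m.eq_C_of_degree_eq_zero hg_const]
      exact hg.map C
    exact hI ▸ Submodule.mem_top
  have hred : f = m.reduce hg f +
      monomial (m.degree f - m.degree g) (hg.unit⁻¹ * m.leadingCoeff f) * g := by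
    simp [reduce]
  have hredJ : m.reduce hg f ∈ J := J.sub_mem hfJ (J.mul_mem_left _ (hIJ hgI))
  have hredI : m.reduce hg f ∈ I :=
    ih _ (hd ▸ m.degree_reduce_lt hg hgf hf_const) rfl hredJ
  rw [hred]
  exact I.add_mem hredI (I.mul_mem_left _ hgI)

end MonomialOrder

namespace GB

variable {n : ℕ}

theorem lexp_eq_degree {K : Type*} [CommSemiring K] (m : MonomialOrder (Fin n))
    (f : MvPolynomial (Fin n) K) : lexp m f = m.degree f :=
  rfl

theorem Prec.cons {m : MonomialOrder (Fin n)} {T' T : List (Fin n →₀ ℕ)} (h : Prec m T' T)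
    (a : Fin n →₀ ℕ) : Prec m (a :: T') (a :: T) := by
  rcases h with ⟨hpre, hne⟩ | ⟨k, hk, hk', htake, hlt⟩
  · exact Or.inl ⟨(List.prefix_cons_inj a).mpr hpre, by simpa using hne⟩
  · exact Or.inr ⟨k + 1, by simpa using hk, by simpa using hk', by simpa using htake,
      by simpa using hlt⟩

theorem prec_of_forall_exists_lt {m : MonomialOrder (Fin n)} {T' T : List (Fin n →₀ ℕ)}
    (hT' : SOrd m T') (hT : SOrd m T) (hne : T ≠ T')
    (hbeat : ∀ t ∈ T, t ∉ T' → ∃ t' ∈ T', t' ∉ T ∧ m.toSyn t' < m.toSyn t) :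
    Prec m T' T := by
  induction T generalizing T' with
  | nil => exact Or.inl ⟨List.nil_prefix, hne⟩
  | cons a T ih =>
  rcases T' with _ | ⟨b, T'⟩
  · obtain ⟨t', ht', -⟩ := hbeat a List.mem_cons_self List.not_mem_nil
    exact absurd ht' List.not_mem_nil
  rw [SOrd, List.pairwise_cons] at hT hT'
  rcases lt_trichotomy (m.toSyn a) (m.toSyn b) with hab | hab | hab
  · have ha : a ∉ b :: T' := by
      rintro (_ | ⟨_, ha⟩)
      exacts [lt_irrefl _ hab, lt_asymm hab (hT'.1 a ha)]
    obtain ⟨t', ht', -, hlt⟩ := hbeat a List.mem_cons_self ha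
    have hbt' : m.toSyn b ≤ m.toSyn t' := by
      rcases ht' with _ | ⟨_, ht'⟩
      exacts [le_rfl, (hT'.1 t' ht').le]
    exact absurd (hlt.trans hab) hbt'.not_gt
  · obtain rfl : a = b := m.toSyn.injective hab
    refine (ih hT'.2 hT.2 (by simpa using hne) fun t ht htT' => ?_).cons a
    have hat : a ≠ t := (hT.1 t ht).ne ∘ congrArg m.toSyn
    obtain ⟨t', ht', ht'T, hlt⟩ := hbeat t (List.mem_cons_of_mem a ht) (by simp [htT', hat.symm])
    simp only [List.mem_cons, not_or] at ht' ht'T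
    exact ⟨t', ht'.resolve_left ht'T.1, ht'T.2, hlt⟩
  · exact Or.inr ⟨0, by simp, by simp, rfl, by simpa using hab⟩

variable {K : Type*} [Field K] (m : MonomialOrder (Fin n))

theorem exists_mem_minGenSet_le {J : Ideal (MvPolynomial (Fin n) K)} {f : MvPolynomial (Fin n) K}
    (hfJ : f ∈ J) (hf0 : f ≠ 0) : ∃ d ∈ minGenSet m J, d ≤ lexp m f := by
  obtain ⟨d, ⟨⟨g, hgJ, hg0, rfl⟩, hgf⟩, hmin⟩ := wellFounded_lt.has_min
    {d | (∃ g ∈ J, g ≠ 0 ∧ lexp m g = d) ∧ d ≤ lexp m f} ⟨_, ⟨f, hfJ, hf0, rfl⟩, le_rfl⟩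
  refine ⟨lexp m g, ⟨⟨g, hgJ, hg0, rfl⟩, fun g' hg'J hg'0 hle => ?_⟩, hgf⟩
  exact eq_of_le_of_not_lt hle (hmin _ ⟨⟨g', hg'J, hg'0, rfl⟩, hle.trans hgf⟩)

theorem le_of_le_of_minGenSet_subset {I J : Ideal (MvPolynomial (Fin n) K)} (hIJ : I ≤ J)
    (hsub : minGenSet m J ⊆ minGenSet m I) : J ≤ I := by
  refine m.ideal_le_of_le_of_forall_exists_degree_le hIJ fun f hfJ hf0 => ?_
  obtain ⟨d, hdJ, hdf⟩ := exists_mem_minGenSet_le m hfJ hf0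
  obtain ⟨⟨g, hgI, hg0, rfl⟩, -⟩ := hsub hdJ
  exact ⟨g, hgI, hg0, by simpa only [lexp_eq_degree] using hdf⟩

theorem exists_minGenSet_lt_of_le {I J : Ideal (MvPolynomial (Fin n) K)} (hIJ : I ≤ J)
    {t : Fin n →₀ ℕ} (htI : t ∈ minGenSet m I) (htJ : t ∉ minGenSet m J) :
    ∃ t' ∈ minGenSet m J, t' ∉ minGenSet m I ∧ m.toSyn t' < m.toSyn t := by
  obtain ⟨⟨f, hfI, hf0, rfl⟩, hfmin⟩ := htI
  obtain ⟨t', ht'J, ht'f⟩ := exists_mem_minGenSet_le m (hIJ hfI) hf0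
  have hne : t' ≠ lexp m f := fun h => htJ (h ▸ ht'J)
  refine ⟨t', ht'J, fun ⟨⟨g, hgI, hg0, hgt'⟩, _⟩ => hne ?_,
    m.toSyn_strictMono (lt_of_le_of_ne ht'f hne)⟩
  exact hgt' ▸ hfmin g hgI hg0 (hgt' ▸ ht'f)

end GB

/-- if `I ⊊ J` then `O_σ(J) ≺_σ O_σ(I)`. -/
theorem stmt5 {n : ℕ} {K : Type*} [Field K] (m : MonomialOrder (Fin n))
    (I J : Ideal (MvPolynomial (Fin n) K)) (h : I < J)
    (LI LJ : List (Fin n →₀ ℕ))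
    (hLI : GB.IsOsIdeal m I LI) (hLJ : GB.IsOsIdeal m J LJ) :
    GB.Prec m LJ LI := by
  refine GB.prec_of_forall_exists_lt hLJ.1 hLI.1 ?_ fun t htI htJ => ?_
  · rintro rfl
    refine h.not_ge (GB.le_of_le_of_minGenSet_subset m h.le fun d hd => ?_)
    exact (hLI.2 d).mp ((hLJ.2 d).mpr hd)
  · obtain ⟨t', ht'J, ht'I, hlt⟩ := GB.exists_minGenSet_lt_of_le m h.le ((hLI.2 t).mp htI)
      (mt (hLJ.2 t).mpr htJ)
    exact ⟨t', (hLJ.2 t').mpr ht'J, mt (hLI.2 t').mp ht'I, hlt⟩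
end

section
/- Let P = Q[x_1,...,x_n], σ a term ordering, I an ideal with reduced σ-Gröbner basis G_σ, F a finite subset of I, and δ a positive integer such that all coefficients of polynomials in G_σ ∪ F lie in the localization Z_δ. If p is a prime not dividing δ, then the ideal generated by π_p(F) in F_p[x_1,...,x_n] is contained in the ideal generated by π_p(G_σ). -/
open MvPolynomial
open scoped Classical

/-!
Let `ℤ_(p) ⊆ ℚ` be the rationals whose denominator is prime to `p`. The reduced Gröbner basis `G`
is monic with coefficients in `ℤ_(p)`, so the division algorithm by `G` runs inside `ℤ_(p)[x]`.
Dividing `f ∈ F ⊆ I` leaves a remainder in `I` none of whose terms is divisible by a leading term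
of `G`; since `G` is a Gröbner basis of `I` the remainder is zero. Hence `f` lies in the ideal of
`ℤ_(p)[x]` generated by `G`, and reduction modulo `p`, a ring homomorphism `ℤ_(p) → 𝔽_p`, carries
this membership to `𝔽_p[x]`.
-/

namespace MonomialOrder

variable {σ R S : Type*} [CommRing R] [CommRing S] (m : MonomialOrder σ)
  {φ : R →+* S}

theorem degree_map_of_injective (hφ : Function.Injective φ) (f : MvPolynomial σ R) :
    m.degree (map φ f) = m.degree f := by
  simp only [degree, support_map_of_injective f hφ]

theorem leadingCoeff_map_of_injective (hφ : Function.Injective φ) (f : MvPolynomial σ R) :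
    m.leadingCoeff (map φ f) = φ (m.leadingCoeff f) := by
  rw [leadingCoeff, degree_map_of_injective m hφ, coeff_map, leadingCoeff]

/-- Divide `f` by `B` in `R[x]`: the remainder maps into `I` and none of its terms is divisible
by a leading term of `B`, so it vanishes. -/
theorem mem_span_of_map_mem (hφ : Function.Injective φ) {B : Set (MvPolynomial σ R)}
    (hB : ∀ b ∈ B, IsUnit (m.leadingCoeff b)) {I : Ideal (MvPolynomial σ S)}
    (hBI : ∀ b ∈ B, map φ b ∈ I)
    (hI : ∀ f ∈ I, f ≠ 0 → ∃ b ∈ B, m.degree b ≤ m.degree f)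
    {f : MvPolynomial σ R} (hf : map φ f ∈ I) : f ∈ Ideal.span B := by
  obtain ⟨g, r, hfr, -, hr⟩ := m.div_set hB f
  have hq : Finsupp.linearCombination _ (fun b : B ↦ (b : MvPolynomial σ R)) g ∈
      Ideal.span B :=
    (Finsupp.mem_span_iff_linearCombination _ _ _).mpr ⟨g, rfl⟩
  have hspan : Ideal.map (map φ) (Ideal.span B) ≤ I := by
    rw [Ideal.map_span, Ideal.span_le]
    rintro _ ⟨b, hb, rfl⟩
    exact hBI b hb
  suffices r = 0 by rwa [hfr, this, add_zero]
  by_contra hr0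
  have hrI : map φ r ∈ I := by
    rw [eq_sub_of_add_eq' hfr.symm, map_sub]
    exact I.sub_mem hf (hspan (Ideal.mem_map_of_mem _ hq))
  obtain ⟨b, hbB, hbr⟩ := hI _ hrI ((map_injective φ hφ).ne_iff' (map_zero _) |>.mpr hr0)
  rw [degree_map_of_injective m hφ] at hbr
  exact hr _ (m.degree_mem_support hr0) b hbB hbr

end MonomialOrder

def pIntegers (p : ℕ) [Fact p.Prime] : Subring ℚ where
  carrier := {a | ¬ p ∣ a.den}
  mul_mem' {a b} ha hb h :=
    ((Fact.out : p.Prime).dvd_mul.mp (h.trans (Rat.mul_den_dvd a b))).elim ha hb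
  add_mem' {a b} ha hb h :=
    ((Fact.out : p.Prime).dvd_mul.mp (h.trans (Rat.add_den_dvd a b))).elim ha hb
  neg_mem' {a} ha := by simpa using ha
  one_mem' := by simpa using (Fact.out : p.Prime).ne_one
  zero_mem' := by simpa using (Fact.out : p.Prime).ne_one

namespace pIntegers

variable {p : ℕ} [Fact p.Prime]

theorem den_cast_ne_zero {a : ℚ} (ha : a ∈ pIntegers p) : (a.den : ZMod p) ≠ 0 := by
  rwa [Ne, ZMod.natCast_eq_zero_iff]

noncomputable def toZMod (p : ℕ) [Fact p.Prime] : pIntegers p →+* ZMod p where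
  toFun a := ((a : ℚ) : ZMod p)
  map_one' := by simp
  map_zero' := by simp
  map_add' a b := Rat.cast_add_of_ne_zero (den_cast_ne_zero a.2) (den_cast_ne_zero b.2)
  map_mul' a b := Rat.cast_mul_of_ne_zero (den_cast_ne_zero a.2) (den_cast_ne_zero b.2)

end pIntegers

theorem MvPolynomial.exists_map_subtype_eq {σ K : Type*} [CommRing K] {S : Subring K}
    {f : MvPolynomial σ K} (hf : ∀ d, coeff d f ∈ S) : ∃ f', map S.subtype f' = f := by
  refine mem_range_map_iff_coeffs_subset.mpr fun c hc => ?_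
  obtain ⟨d, -, rfl⟩ := mem_coeffs_iff.mp hc
  exact ⟨⟨_, hf d⟩, rfl⟩

namespace GB

variable {n : ℕ}

theorem IsReducedGB.mem_span_of_map_subtype_mem {K : Type*} [Field K]
    {m : MonomialOrder (Fin n)} {G : Finset (MvPolynomial (Fin n) K)}
    {I : Ideal (MvPolynomial (Fin n) K)} (hG : IsReducedGB m G I) {S : Subring K}
    (hGS : ∀ g ∈ G, ∀ d, coeff d g ∈ S)
    {f : MvPolynomial (Fin n) S} (hf : map S.subtype f ∈ I) :
    f ∈ Ideal.span {b | map S.subtype b ∈ G} := by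
  obtain ⟨⟨-, hGI, -, hGdeg⟩, hGmonic, -⟩ := hG
  have hinj : Function.Injective S.subtype := Subtype.val_injective
  refine m.mem_span_of_map_mem hinj (fun b hb => ?_) (fun b hb => hGI hb) (fun g hg hg0 => ?_) hf
  · have h := hGmonic _ hb
    rw [lcoeff, lexp, ← MonomialOrder.degree, ← MonomialOrder.leadingCoeff,
      m.leadingCoeff_map_of_injective hinj] at h
    rw [hinj (h.trans S.subtype.map_one.symm)]
    exact isUnit_one
  · obtain ⟨g', hg', hle⟩ := hGdeg g hg hg0
    obtain ⟨b, rfl⟩ := exists_map_subtype_eq (hGS g' hg')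
    exact ⟨b, hg', by rwa [lexp, ← MonomialOrder.degree, m.degree_map_of_injective hinj] at hle⟩

theorem coeff_piP (p : ℕ) [Fact p.Prime] (f : MvPolynomial (Fin n) ℚ) (d : Fin n →₀ ℕ) :
    coeff d (piP p f) = ((coeff d f : ℚ) : ZMod p) := by
  rw [piP, coeff_sum, Finset.sum_eq_single d (fun e _ he => by rw [coeff_monomial, if_neg he])
    (fun hd => by simp [notMem_support_iff.mp hd, redQ]), coeff_monomial, if_pos rfl, redQ,
    Rat.cast_def, div_eq_mul_inv]

theorem piP_map_subtype (p : ℕ) [Fact p.Prime] (f : MvPolynomial (Fin n) (pIntegers p)) :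
    piP p (map (pIntegers p).subtype f) = map (pIntegers.toZMod p) f := by
  ext d
  rw [coeff_piP, coeff_map, coeff_map]
  rfl

theorem coeff_mem_pIntegers_of_not_dvd_den {p : ℕ} [Fact p.Prime] {f : MvPolynomial (Fin n) ℚ}
    (hf : ¬ p ∣ den f) (d : Fin n →₀ ℕ) : coeff d f ∈ pIntegers p := by
  by_cases hd : d ∈ f.support
  · exact fun h => hf (h.trans (Finset.dvd_lcm hd))
  · rw [notMem_support_iff.mp hd]
    exact (pIntegers p).zero_mem

end GB

theorem stmt8_general {n : ℕ} (m : MonomialOrder (Fin n))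
    (I : Ideal (MvPolynomial (Fin n) ℚ)) (G F : Finset (MvPolynomial (Fin n) ℚ))
    (hG : GB.IsReducedGB m G I) (hF : (F : Set (MvPolynomial (Fin n) ℚ)) ⊆ I)
    (δ : ℕ)
    (hcoef : ∀ f ∈ G ∪ F, ∀ q : ℕ, q.Prime → q ∣ GB.den f → q ∣ δ)
    (p : ℕ) [Fact p.Prime] (hp : ¬ p ∣ δ) :
    Ideal.span ((F.image (GB.piP p) : Finset (MvPolynomial (Fin n) (ZMod p))) :
        Set (MvPolynomial (Fin n) (ZMod p))) ≤
      Ideal.span ((G.image (GB.piP p) : Finset (MvPolynomial (Fin n) (ZMod p))) :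
        Set (MvPolynomial (Fin n) (ZMod p))) := by
  have hint : ∀ f ∈ G ∪ F, ∀ d, coeff d f ∈ pIntegers p := fun f hf =>
    GB.coeff_mem_pIntegers_of_not_dvd_den fun h => hp (hcoef f hf p Fact.out h)
  rw [Ideal.span_le]
  intro _ hf
  obtain ⟨f, hfF, rfl⟩ := Finset.mem_image.mp hf
  obtain ⟨f', rfl⟩ := exists_map_subtype_eq (hint f (Finset.mem_union_right G hfF))
  have hf' := hG.mem_span_of_map_subtype_mem (fun g hg => hint g (Finset.mem_union_left F hg))
    (hF hfF)
  rw [GB.piP_map_subtype]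
  refine Ideal.span_mono ?_ (Ideal.map_span (map (pIntegers.toZMod p)) _ ▸
    Ideal.mem_map_of_mem _ hf')
  rintro _ ⟨b, hb, rfl⟩
  exact Finset.mem_image.mpr ⟨_, hb, GB.piP_map_subtype p b⟩

/-- `⟨π_p(F)⟩ ⊆ ⟨π_p(G_σ)⟩` for any finite `F ⊆ I` with coefficients
in `ℤ_δ`, when `p ∤ δ`. -/
theorem stmt8 {n : ℕ} (m : MonomialOrder (Fin n))
    (I : Ideal (MvPolynomial (Fin n) ℚ)) (G F : Finset (MvPolynomial (Fin n) ℚ))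
    (hG : GB.IsReducedGB m G I) (hF : (F : Set (MvPolynomial (Fin n) ℚ)) ⊆ I)
    (δ : ℕ) (hδ : 0 < δ)
    (hcoef : ∀ f ∈ G ∪ F, ∀ q : ℕ, q.Prime → q ∣ GB.den f → q ∣ δ)
    (p : ℕ) [Fact p.Prime] (hp : ¬ p ∣ δ) :
    Ideal.span ((F.image (GB.piP p) : Finset (MvPolynomial (Fin n) (ZMod p))) :
        Set (MvPolynomial (Fin n) (ZMod p))) ≤
      Ideal.span ((G.image (GB.piP p) : Finset (MvPolynomial (Fin n) (ZMod p))) :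
        Set (MvPolynomial (Fin n) (ZMod p))) :=
  stmt8_general m I G F hG hF δ hcoef p hp
end

section
/- Let P = Q[x_1,...,x_n], σ a term ordering, I a nonzero ideal with reduced σ-Gröbner basis G_σ = {g_1,...,g_r} indexed so that LT_σ(g_1) <_σ ... <_σ LT_σ(g_r). Let G̃ = {g̃_1,...,g̃_s} be a minimal strong σ-Gröbner basis of the ideal J = ⟨prim(G_σ)⟩ ⊆ Z[x_1,...,x_n]. Then the elements of G̃ can be indexed so that LT_σ(g̃_i) = LT_σ(g_i) for i = 1,...,r, while for i = r+1,...,s each LT_σ(g̃_i) is a proper multiple of LT_σ(g_k) for some k ≤ r. -/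
open MvPolynomial
open scoped Classical

/-
Since `prim(g)` is a nonzero rational multiple of `g`, the ideal `J` becomes a subset of `I`
after extending scalars to `ℚ`, so the leading power-product of every nonzero element of `J` is
a multiple of some `LT_σ(g_k)`. Conversely `prim(g_k) ∈ J` has leading power-product
`LT_σ(g_k)`, and reducedness of `G_σ` forces the element of `G̃` whose leading monomial divides
it to have exactly this leading power-product. Finally, two elements of a minimal strong
Gröbner basis over `ℤ` never share a leading power-product: a Bézout combination of them has
the gcd of their leading coefficients as leading coefficient, and the element of `G̃` dividing
its leading monomial would divide both of theirs.
-/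

namespace GB

open MvPolynomial

variable {n : ℕ}

theorem exists_nodup_append_of_injOn {β γ : Type*} [DecidableEq β] {φ : β → γ}
    {T : Finset β} (hφ : Set.InjOn φ T) {l : List γ} (hl : l.Nodup)
    (hlT : ∀ c ∈ l, ∃ t ∈ T, φ t = c) :
    ∃ front back : List β, (front ++ back).Nodup ∧ (front ++ back).toFinset = T ∧
      front.map φ = l ∧ ∀ t ∈ back, t ∈ T ∧ φ t ∉ l := by
  set front := l.pmap (fun c hc => (hlT c hc).choose) fun _ => id
  have hfront : front.map φ = l := by
    rw [List.map_pmap, List.pmap_eq_self]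
    exact fun c hc => (hlT c hc).choose_spec.2
  have hsub : front.toFinset ⊆ T := by
    intro t ht
    obtain ⟨c, hc, rfl⟩ := List.mem_pmap.mp (List.mem_toFinset.mp ht)
    exact (hlT c hc).choose_spec.1
  refine ⟨front, (T \ front.toFinset).toList, ?_, ?_, hfront, ?_⟩
  · refine List.nodup_append.mpr ⟨(hfront ▸ hl).of_map φ, Finset.nodup_toList _, ?_⟩
    rintro t ht _ hs rfl
    simp_all
  · rw [List.toFinset_append, Finset.toList_toFinset, Finset.union_sdiff_of_subset hsub]
  · intro t ht
    obtain ⟨htT, htl⟩ := Finset.mem_sdiff.mp (Finset.mem_toList.mp ht)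
    refine ⟨htT, fun hφt => htl ?_⟩
    rw [← hfront] at hφt
    obtain ⟨s, hs, hst⟩ := List.mem_map.mp hφt
    rw [← hφ (hsub (List.mem_toFinset.mpr hs)) htT hst]
    exact List.mem_toFinset.mpr hs

theorem exists_nodup_getD_of_injOn {β γ : Type*} [DecidableEq β] {φ : β → γ}
    {T : Finset β} (hφ : Set.InjOn φ T) {l : List γ} (hl : l.Nodup)
    (hlT : ∀ c ∈ l, ∃ t ∈ T, φ t = c) (d : β) :
    ∃ L : List β, L.Nodup ∧ L.toFinset = T ∧ l.length ≤ L.length ∧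
      (∀ i (hi : i < l.length), φ (L.getD i d) = l[i]) ∧
      ∀ i, l.length ≤ i → i < L.length → L.getD i d ∈ T ∧ φ (L.getD i d) ∉ l := by
  obtain ⟨front, back, hnd, hT, hfront, hback⟩ := exists_nodup_append_of_injOn hφ hl hlT
  have hlen : front.length = l.length := by rw [← hfront, List.length_map]
  refine ⟨front ++ back, hnd, hT, by simp [hlen], fun i hi => ?_, fun i hi hi' => hback _ ?_⟩
  · simp_rw [← hfront, List.getElem_map, List.getD_append _ _ _ _ (hlen ▸ hi),
      List.getD_eq_getElem _ _ (hlen ▸ hi)]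
  · have hib : i - front.length < back.length := by
      rw [List.length_append] at hi'
      omega
    rw [List.getD_append_right _ _ _ _ (hlen ▸ hi), List.getD_eq_getElem _ _ hib]
    exact List.getElem_mem hib

section LeadingData

variable {R : Type*} [CommSemiring R] (m : MonomialOrder (Fin n)) (f : MvPolynomial (Fin n) R)

theorem lexp_eq_degree_s10 : lexp m f = m.degree f := rfl

theorem LM_eq_leadingTerm : LM m f = m.leadingTerm f := rfl

end LeadingData

section MonomialOrder

variable {σ R S : Type*} [CommSemiring R] [CommSemiring S] (m : MonomialOrder σ)

theorem degree_map_of_injective {φ : R →+* S} (hφ : Function.Injective φ)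
    (f : MvPolynomial σ R) : m.degree (map φ f) = m.degree f := by
  simp only [MonomialOrder.degree, support_map_of_injective f hφ]

theorem degree_le_and_leadingCoeff_dvd_of_leadingTerm_dvd {f g : MvPolynomial σ R}
    (hf : f ≠ 0) (h : m.leadingTerm g ∣ m.leadingTerm f) :
    m.degree g ≤ m.degree f ∧ m.leadingCoeff g ∣ m.leadingCoeff f := by
  obtain ⟨hle, hdvd⟩ := monomial_dvd_monomial.mp h
  exact ⟨hle.resolve_left (m.leadingCoeff_ne_zero_iff.mpr hf), hdvd⟩

theorem degree_eq_of_coeff_ne_zero {f : MvPolynomial σ R} {d : σ →₀ ℕ}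
    (hd : f.coeff d ≠ 0) (hle : m.toSyn (m.degree f) ≤ m.toSyn d) : m.degree f = d :=
  m.toSyn.injective (le_antisymm hle (m.le_degree (mem_support_iff.mpr hd)))

theorem exists_leadingTerm_eq_gcd {J : Ideal (MvPolynomial σ ℤ)} {t t' : MvPolynomial σ ℤ}
    (ht : t ∈ J) (ht' : t' ∈ J) (ht0 : t ≠ 0) (hdeg : m.degree t' = m.degree t) :
    ∃ f ∈ J, f ≠ 0 ∧
      m.leadingTerm f =
        monomial (m.degree t) (Int.gcd (m.leadingCoeff t) (m.leadingCoeff t') : ℤ) := by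
  set c := m.leadingCoeff t
  set c' := m.leadingCoeff t'
  set f := Int.gcdA c c' • t + Int.gcdB c c' • t'
  have hcoeff : f.coeff (m.degree t) = Int.gcd c c' := by
    rw [Int.gcd_eq_gcd_ab]
    simp only [f, coeff_add, coeff_smul, smul_eq_mul, c, c', MonomialOrder.leadingCoeff, hdeg]
    ring
  have hgcd : (Int.gcd c c' : ℤ) ≠ 0 :=
    Int.natCast_ne_zero.mpr (Int.gcd_ne_zero_left (m.leadingCoeff_ne_zero_iff.mpr ht0))
  have hle : m.toSyn (m.degree f) ≤ m.toSyn (m.degree t) := by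
    refine m.degree_add_le.trans (sup_le m.degree_smul_le ?_)
    exact m.degree_smul_le.trans (congrArg m.toSyn hdeg).le
  have hdegf : m.degree f = m.degree t := degree_eq_of_coeff_ne_zero m (hcoeff ▸ hgcd) hle
  refine ⟨f, J.add_mem (J.smul_of_tower_mem _ ht) (J.smul_of_tower_mem _ ht'), ?_, ?_⟩
  · rintro hf
    exact hgcd (by rw [← hcoeff, hf, coeff_zero])
  · rw [MonomialOrder.leadingTerm, MonomialOrder.leadingCoeff, hdegf, hcoeff]

end MonomialOrder

section Primitive

theorem cast_num_mul_of_den_dvd {a : ℚ} {N : ℕ} (h : a.den ∣ N) :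
    ((a * N).num : ℚ) = a * N := by
  obtain ⟨k, rfl⟩ := h
  have : a * ((a.den * k : ℕ) : ℚ) = ((a.num * k : ℤ) : ℚ) := by
    push_cast
    rw [← mul_assoc, Rat.mul_den_eq_num]
  rw [this, Rat.num_intCast]

theorem den_coeff_dvd_den (f : MvPolynomial (Fin n) ℚ) (d : Fin n →₀ ℕ) :
    (f.coeff d).den ∣ den f := by
  by_cases hd : d ∈ f.support
  · exact Finset.dvd_lcm hd
  · simp [notMem_support_iff.mp hd]

theorem coeff_intScale (f : MvPolynomial (Fin n) ℚ) (d : Fin n →₀ ℕ) :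
    (intScale f).coeff d = (f.coeff d * den f).num := by
  by_cases hd : d ∈ f.support
  · simp [intScale, coeff_sum, coeff_monomial, hd]
  · simp [intScale, coeff_sum, coeff_monomial, hd, notMem_support_iff.mp hd]

theorem map_intScale (f : MvPolynomial (Fin n) ℚ) :
    map (Int.castRingHom ℚ) (intScale f) = (den f : ℚ) • f := by
  ext d
  rw [coeff_map, coeff_intScale, coeff_smul, smul_eq_mul, eq_intCast,
    cast_num_mul_of_den_dvd (den_coeff_dvd_den f d), mul_comm]

theorem den_ne_zero (f : MvPolynomial (Fin n) ℚ) : den f ≠ 0 := by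
  intro h
  obtain ⟨d, -, hd⟩ := Finset.lcm_eq_zero_iff.mp h
  exact (f.coeff d).den_nz hd

theorem coeff_primQ (f : MvPolynomial (Fin n) ℚ) (d : Fin n →₀ ℕ) :
    (primQ f).coeff d =
      (intScale f).coeff d / (intScale f).support.gcd fun e => (intScale f).coeff e := by
  by_cases hd : d ∈ (intScale f).support
  · simp [primQ, coeff_sum, coeff_monomial, hd]
  · simp [primQ, coeff_sum, coeff_monomial, hd, notMem_support_iff.mp hd]

theorem C_gcd_mul_primQ (f : MvPolynomial (Fin n) ℚ) :
    C ((intScale f).support.gcd fun e => (intScale f).coeff e) * primQ f = intScale f := by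
  ext d
  rw [coeff_C_mul, coeff_primQ, Int.mul_ediv_cancel']
  by_cases hd : d ∈ (intScale f).support
  · exact Finset.gcd_dvd hd
  · simp [notMem_support_iff.mp hd]

theorem exists_map_primQ_eq_smul {f : MvPolynomial (Fin n) ℚ} (hf : f ≠ 0) :
    ∃ q : ℚ, q ≠ 0 ∧ map (Int.castRingHom ℚ) (primQ f) = q • f := by
  set c := (intScale f).support.gcd fun e => (intScale f).coeff e
  have hden : (den f : ℚ) ≠ 0 := Nat.cast_ne_zero.mpr (den_ne_zero f)
  have h : (c : ℚ) • map (Int.castRingHom ℚ) (primQ f) = (den f : ℚ) • f := by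
    rw [← map_intScale, ← C_gcd_mul_primQ, map_mul, map_C, smul_eq_C_mul]
    rfl
  have hc : (c : ℚ) ≠ 0 := by
    rintro hc
    rw [hc, zero_smul, eq_comm, smul_eq_zero] at h
    exact h.elim hden hf
  refine ⟨(c : ℚ)⁻¹ * den f, mul_ne_zero (inv_ne_zero hc) hden, ?_⟩
  rw [mul_smul, ← h, inv_smul_smul₀ hc]

theorem primQ_ne_zero {f : MvPolynomial (Fin n) ℚ} (hf : f ≠ 0) : primQ f ≠ 0 := by
  obtain ⟨q, hq, h⟩ := exists_map_primQ_eq_smul hf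
  rintro h0
  rw [h0, map_zero, eq_comm, smul_eq_zero] at h
  exact h.elim hq hf

theorem degree_primQ (m : MonomialOrder (Fin n)) {f : MvPolynomial (Fin n) ℚ} (hf : f ≠ 0) :
    m.degree (primQ f) = m.degree f := by
  obtain ⟨q, hq, h⟩ := exists_map_primQ_eq_smul hf
  rw [← degree_map_of_injective m (Int.castRingHom ℚ).injective_int, h,
    m.degree_smul_of_isRegular (IsRegular.of_ne_zero hq)]

end Primitive

section Groebner

variable (m : MonomialOrder (Fin n)) {I : Ideal (MvPolynomial (Fin n) ℚ)}
  {G : Finset (MvPolynomial (Fin n) ℚ)}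

theorem IsGB.map_mem_of_mem_span_primQ (hG : IsGB m G I) {t : MvPolynomial (Fin n) ℤ}
    (ht : t ∈ Ideal.span (primQ '' (G : Set (MvPolynomial (Fin n) ℚ)))) :
    map (Int.castRingHom ℚ) t ∈ I := by
  refine (Ideal.map_le_iff_le_comap.mpr (Ideal.span_le.mpr ?_)) (Ideal.mem_map_of_mem _ ht)
  rintro _ ⟨g, hg, rfl⟩
  obtain ⟨q, -, hq⟩ := exists_map_primQ_eq_smul (ne_of_mem_of_not_mem hg hG.1)
  rw [SetLike.mem_coe, Ideal.mem_comap, hq, smul_eq_C_mul]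
  exact I.mul_mem_left _ (hG.2.1 hg)

theorem IsGB.exists_degree_le_of_mem_span_primQ (hG : IsGB m G I)
    {t : MvPolynomial (Fin n) ℤ}
    (ht : t ∈ Ideal.span (primQ '' (G : Set (MvPolynomial (Fin n) ℚ)))) (ht0 : t ≠ 0) :
    ∃ g ∈ G, m.degree g ≤ m.degree t := by
  have hmap0 : map (Int.castRingHom ℚ) t ≠ 0 :=
    (map_ne_zero_iff _ (map_injective _ (Int.castRingHom ℚ).injective_int)).mpr ht0
  obtain ⟨g, hg, hle⟩ := hG.2.2.2 _ (hG.map_mem_of_mem_span_primQ m ht) hmap0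
  exact ⟨g, hg, (degree_map_of_injective m (Int.castRingHom ℚ).injective_int t) ▸ hle⟩

theorem IsReducedGB.eq_of_degree_le (hG : IsReducedGB m G I) {g g' : MvPolynomial (Fin n) ℚ}
    (hg : g ∈ G) (hg' : g' ∈ G) (hle : m.degree g' ≤ m.degree g) : g' = g := by
  by_contra hne
  exact hG.2.2 g hg _ (m.degree_mem_support (ne_of_mem_of_not_mem hg hG.1.1)) g' hg' hne hle

theorem IsReducedGB.exists_degree_eq (hG : IsReducedGB m G I)
    {T : Finset (MvPolynomial (Fin n) ℤ)}
    (hT : IsStrongGB m T (Ideal.span (primQ '' (G : Set (MvPolynomial (Fin n) ℚ)))))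
    {g : MvPolynomial (Fin n) ℚ} (hg : g ∈ G) : ∃ t ∈ T, m.degree t = m.degree g := by
  have hg0 : g ≠ 0 := ne_of_mem_of_not_mem hg hG.1.1
  obtain ⟨t, htT, hdvd⟩ :=
    hT.2.2 _ (Ideal.subset_span ⟨g, hg, rfl⟩) (primQ_ne_zero hg0)
  have htg : m.degree t ≤ m.degree g :=
    degree_primQ m hg0 ▸ (degree_le_and_leadingCoeff_dvd_of_leadingTerm_dvd m
      (primQ_ne_zero hg0) hdvd).1
  have ht : t ∈ Ideal.span (primQ '' (G : Set (MvPolynomial (Fin n) ℚ))) :=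
    hT.2.1 ▸ Ideal.subset_span htT
  obtain ⟨g', hg', hgt⟩ :=
    hG.1.exists_degree_le_of_mem_span_primQ m ht (ne_of_mem_of_not_mem htT hT.1)
  obtain rfl := hG.eq_of_degree_le m hg hg' (hgt.trans htg)
  exact ⟨t, htT, le_antisymm htg hgt⟩

end Groebner

section StrongGroebner

variable (m : MonomialOrder (Fin n)) {T : Finset (MvPolynomial (Fin n) ℤ)}
  {J : Ideal (MvPolynomial (Fin n) ℤ)}

theorem IsMinStrongGB.injOn_degree (hT : IsMinStrongGB m T J) :
    Set.InjOn m.degree (T : Set (MvPolynomial (Fin n) ℤ)) := by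
  intro t ht t' ht' hdeg
  have hJ : ∀ {s}, s ∈ T → s ∈ J := fun hs => hT.1.2.1 ▸ Ideal.subset_span hs
  obtain ⟨f, hfJ, hf0, hlt⟩ := exists_leadingTerm_eq_gcd m (hJ ht) (hJ ht')
    (ne_of_mem_of_not_mem ht hT.1.1) hdeg.symm
  obtain ⟨s, hs, hsf⟩ := hT.1.2.2 f hfJ hf0
  have hdvd : ∀ {u : MvPolynomial (Fin n) ℤ}, m.degree u = m.degree t →
      (Int.gcd (m.leadingCoeff t) (m.leadingCoeff t') : ℤ) ∣ m.leadingCoeff u →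
      m.leadingTerm s ∣ m.leadingTerm u := by
    intro u hu hgcd
    refine hsf.trans ?_
    rw [LM_eq_leadingTerm, hlt, MonomialOrder.leadingTerm, hu]
    exact monomial_dvd_monomial.mpr ⟨Or.inr le_rfl, hgcd⟩
  have hst : s = t := by
    by_contra hne
    exact hT.2 s hs t ht hne (hdvd rfl (Int.gcd_dvd_left _ _))
  have hst' : s = t' := by
    by_contra hne
    exact hT.2 s hs t' ht' hne (hdvd hdeg.symm (Int.gcd_dvd_right _ _))
  exact hst.symm.trans hst'

end StrongGroebner

end GB

theorem stmt10_general {n : ℕ} (m : MonomialOrder (Fin n))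
    (I : Ideal (MvPolynomial (Fin n) ℚ))
    (Gl : List (MvPolynomial (Fin n) ℚ))
    (hGred : GB.IsReducedGB m Gl.toFinset I)
    (hsort : Gl.Pairwise fun g h => m.toSyn (GB.lexp m g) < m.toSyn (GB.lexp m h))
    (Gt : Finset (MvPolynomial (Fin n) ℤ))
    (hGt : GB.IsMinStrongGB m Gt
      (Ideal.span (GB.primQ '' (Gl.toFinset : Set (MvPolynomial (Fin n) ℚ))))) :
    ∃ Gtl : List (MvPolynomial (Fin n) ℤ), Gtl.Nodup ∧ Gtl.toFinset = Gt ∧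
      Gl.length ≤ Gtl.length ∧
      (∀ i < Gl.length, GB.lexp m (Gtl.getD i 0) = GB.lexp m (Gl.getD i 0)) ∧
      ∀ i, Gl.length ≤ i → i < Gtl.length →
        ∃ j < Gl.length, GB.lexp m (Gl.getD j 0) ≤ GB.lexp m (Gtl.getD i 0) ∧
          GB.lexp m (Gl.getD j 0) ≠ GB.lexp m (Gtl.getD i 0) := by
  simp only [GB.lexp_eq_degree_s10]
  have hnd : (Gl.map m.degree).Nodup :=
    List.pairwise_map.mpr (hsort.imp fun h he => h.ne (congrArg m.toSyn he))
  have hmatch : ∀ d ∈ Gl.map m.degree, ∃ t ∈ Gt, m.degree t = d := by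
    intro d hd
    obtain ⟨g, hg, rfl⟩ := List.mem_map.mp hd
    exact hGred.exists_degree_eq m hGt.1 (List.mem_toFinset.mpr hg)
  obtain ⟨Gtl, hnodup, hGt_eq, hlen, hfront, hback⟩ :=
    GB.exists_nodup_getD_of_injOn (GB.IsMinStrongGB.injOn_degree m hGt) hnd hmatch 0
  rw [List.length_map] at hlen hback
  refine ⟨Gtl, hnodup, hGt_eq, hlen, fun i hi => ?_, fun i hi hi' => ?_⟩
  · rw [hfront i (by simpa using hi), List.getElem_map, List.getD_eq_getElem _ _ hi]
  · obtain ⟨htGt, htGl⟩ := hback i hi hi'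
    obtain ⟨g, hg, hgt⟩ := hGred.1.exists_degree_le_of_mem_span_primQ m
      (hGt.1.2.1 ▸ Ideal.subset_span htGt) (ne_of_mem_of_not_mem htGt hGt.1.1)
    obtain ⟨j, hj, rfl⟩ := List.getElem_of_mem (List.mem_toFinset.mp hg)
    refine ⟨j, hj, ?_⟩
    rw [List.getD_eq_getElem _ _ hj]
    exact ⟨hgt, fun he => htGl (he ▸ List.mem_map_of_mem (List.getElem_mem hj))⟩

/-- a minimal strong σ-Gröbner basis of `⟨prim(G_σ)⟩ ⊆ ℤ[x]` can be
indexed so that its first `r` leading terms agree with those of the reduced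
σ-Gröbner basis `G_σ = (g_1, …, g_r)`, and every later leading term is a proper
multiple of some `LT_σ(g_k)`, `k ≤ r`. -/
theorem stmt10 {n : ℕ} (m : MonomialOrder (Fin n))
    (I : Ideal (MvPolynomial (Fin n) ℚ)) (hI : I ≠ ⊥)
    (Gl : List (MvPolynomial (Fin n) ℚ)) (hGnd : Gl.Nodup)
    (hGred : GB.IsReducedGB m Gl.toFinset I)
    (hsort : Gl.Pairwise fun g h => m.toSyn (GB.lexp m g) < m.toSyn (GB.lexp m h))
    (Gt : Finset (MvPolynomial (Fin n) ℤ))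
    (hGt : GB.IsMinStrongGB m Gt
      (Ideal.span (GB.primQ '' (Gl.toFinset : Set (MvPolynomial (Fin n) ℚ))))) :
    ∃ Gtl : List (MvPolynomial (Fin n) ℤ), Gtl.Nodup ∧ Gtl.toFinset = Gt ∧
      Gl.length ≤ Gtl.length ∧
      (∀ i < Gl.length, GB.lexp m (Gtl.getD i 0) = GB.lexp m (Gl.getD i 0)) ∧
      ∀ i, Gl.length ≤ i → i < Gtl.length →
        ∃ j < Gl.length, GB.lexp m (Gl.getD j 0) ≤ GB.lexp m (Gtl.getD i 0) ∧
          GB.lexp m (Gl.getD j 0) ≠ GB.lexp m (Gtl.getD i 0) :=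
  stmt10_general m I Gl hGred hsort Gt hGt
end
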